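/- The 2-dimensional subspace of ℂ² ⊗ ℂ³ spanned by the vectors (1/√3)(e₀⊗e₂ − √2·e₁⊗e₀) and (1/√3)(√2·e₀⊗e₁ − e₁⊗e₂) is an entanglement-breaking space. -/

import Mathlib

open scoped BigOperators ComplexOrder
open Kronecker

noncomputable section

/-- The `j`-th standard basis vector of `ℂ^q` (zero if `j ≥ q`). -/
def ee (q : ℕ) (j : ℕ) : Fin q → ℂ := fun b => if (b : ℕ) = j then 1 else 0

/-- Tensor (Kronecker) product of two vectors. -/
def tens {A B : Type*} (x : A → ℂ) (y : B → ℂ) : A × B → ℂ := fun p => x p.1 * y p.2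

/-- A matrix on `ℂ^A ⊗ ℂ^B` is separable if it is a finite sum of Kronecker products of
rank-one positive semidefinite matrices. -/
def IsSep {A B : Type*} (ρ : Matrix (A × B) (A × B) ℂ) : Prop :=
  ∃ (T : ℕ) (x : Fin T → A → ℂ) (y : Fin T → B → ℂ),
    ρ = ∑ t : Fin T, Matrix.of (fun p q : A × B =>
      (x t p.1 * (starRingEnd ℂ) (x t q.1)) * (y t p.2 * (starRingEnd ℂ) (y t q.2)))

/-- Partial trace over the middle (B) system of the rank-one projection `|Ψ⟩⟨Ψ|`. -/
def TrB {A B : Type*} [Fintype B] {k : ℕ} (Ψ : A × B × Fin k → ℂ) :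
    Matrix (A × Fin k) (A × Fin k) ℂ :=
  Matrix.of fun p q => ∑ b : B, Ψ (p.1, b, p.2) * (starRingEnd ℂ) (Ψ (q.1, b, q.2))

/-- A subspace `V ⊆ ℂ^A ⊗ ℂ^B` is entanglement breaking if for every ancilla dimension
`k ≥ 1` and every `Ψ` whose slices all lie in `V`, the matrix `Tr_B |Ψ⟩⟨Ψ|` is separable. -/
def IsEBSpace {A B : Type*} [Fintype B] (V : Submodule ℂ (A × B → ℂ)) : Prop :=
  ∀ (k : ℕ), 1 ≤ k → ∀ Ψ : A × B × Fin k → ℂ,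
    (∀ ℓ : Fin k, (fun ab : A × B => Ψ (ab.1, ab.2, ℓ)) ∈ V) → IsSep (TrB Ψ)

/-- Partial transpose on the B system. -/
def PT {A B : Type*} (ρ : Matrix (A × B) (A × B) ℂ) : Matrix (A × B) (A × B) ℂ :=
  Matrix.of fun p q => ρ (p.1, q.2) (q.1, p.2)

/-- Partial trace over the B system of a matrix. -/
def trBmat {A B : Type*} [Fintype B] (ρ : Matrix (A × B) (A × B) ℂ) : Matrix A A ℂ :=
  Matrix.of fun a a' => ∑ b : B, ρ (a, b) (a', b)

/-- Partial trace over the A system of a matrix. -/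
def trAmat {A B : Type*} [Fintype A] (ρ : Matrix (A × B) (A × B) ℂ) : Matrix B B ℂ :=
  Matrix.of fun b b' => ∑ a : A, ρ (a, b) (a, b')

/-!
A vector of the span with coefficients `√3 u, √3 w` is the `2 × 3` array
`[[0, √2 w, u], [-√2 u, 0, -w]]`, so for `Ψ` with slices in the span
`Tr_B |Ψ⟩⟨Ψ| = [[uu* + 2ww*, -uw*], [-wu*, 2uu* + ww*]]`. This is the block matrix
`[[uu* + vv*, uv*], [vu*, uu* + vv*]]` with `v = -w`, plus the product terms `e₀e₀* ⊗ ww*` and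
`e₁e₁* ⊗ uu*`; and that block matrix is separable by polarization: it is the average over the
fourth roots of unity `ω` of `(1, ω)(1, ω)* ⊗ (u + ω̄ v)(u + ω̄ v)*`.
-/

open Matrix

theorem isSep_iff {A B : Type*} (ρ : Matrix (A × B) (A × B) ℂ) :
    IsSep ρ ↔ ∃ (T : ℕ) (x : Fin T → A → ℂ) (y : Fin T → B → ℂ),
      ρ = ∑ t, vecMulVec (x t) (star (x t)) ⊗ₖ vecMulVec (y t) (star (y t)) :=
  Iff.rfl

theorem IsSep.add {A B : Type*} {ρ σ : Matrix (A × B) (A × B) ℂ} (hρ : IsSep ρ)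
    (hσ : IsSep σ) : IsSep (ρ + σ) := by
  obtain ⟨T, x, y, rfl⟩ := (isSep_iff ρ).1 hρ
  obtain ⟨S, x', y', rfl⟩ := (isSep_iff σ).1 hσ
  exact (isSep_iff _).2
    ⟨T + S, Fin.append x x', Fin.append y y', by simp [Fin.sum_univ_add]⟩

theorem isSep_kronecker_vecMulVec {A B : Type*} (x : A → ℂ) (y : B → ℂ) :
    IsSep (vecMulVec x (star x) ⊗ₖ vecMulVec y (star y)) :=
  (isSep_iff _).2 ⟨1, ![x], ![y], by simp⟩

def polarMatrix {B : Type*} (u v : B → ℂ) : Matrix (Fin 2 × B) (Fin 2 × B) ℂ :=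
  Matrix.of fun p q =>
    if p.1 = q.1 then u p.2 * starRingEnd ℂ (u q.2) + v p.2 * starRingEnd ℂ (v q.2)
    else if p.1 = 0 then u p.2 * starRingEnd ℂ (v q.2) else v p.2 * starRingEnd ℂ (u q.2)

theorem isSep_polarMatrix {B : Type*} (u v : B → ℂ) : IsSep (polarMatrix u v) := by
  refine (isSep_iff _).2 ⟨4,
    ![![1/2, 1/2], ![1/2, Complex.I/2], ![1/2, -1/2], ![1/2, -Complex.I/2]],
    ![u + v, u - Complex.I • v, u - v, u + Complex.I • v], ?_⟩
  ext ⟨a, ℓ⟩ ⟨a', ℓ'⟩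
  fin_cases a <;> fin_cases a' <;>
    simp only [polarMatrix, Fin.sum_univ_four, Matrix.sum_apply, kroneckerMap_apply,
      vecMulVec_apply, of_apply, Fin.isValue, Fin.zero_eta, Fin.mk_one, zero_ne_one, one_ne_zero,
      ↓reduceIte, cons_val', cons_val_zero, cons_val_one, cons_val_fin_one, cons_val,
      Pi.star_apply, Pi.add_apply, Pi.sub_apply, Pi.smul_apply, smul_eq_mul, RCLike.star_def,
      map_add, map_sub, map_mul, map_neg, map_div₀, map_one, map_ofNat, Complex.conj_I] <;>
    ring_nf <;> simp only [Complex.I_sq, Complex.I_pow_four] <;> ring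

theorem exists_coeffs_of_slices_mem_span {k : ℕ} (Ψ : Fin 2 × Fin 3 × Fin k → ℂ)
    (hΨ : ∀ ℓ : Fin k, (fun ab : Fin 2 × Fin 3 => Ψ (ab.1, ab.2, ℓ)) ∈ Submodule.span ℂ
      ({fun p : Fin 2 × Fin 3 =>
          (1 / (Real.sqrt 3 : ℂ)) *
            (ee 2 0 p.1 * ee 3 2 p.2 - (Real.sqrt 2 : ℂ) * ee 2 1 p.1 * ee 3 0 p.2),
        fun p : Fin 2 × Fin 3 =>
          (1 / (Real.sqrt 3 : ℂ)) *
            ((Real.sqrt 2 : ℂ) * ee 2 0 p.1 * ee 3 1 p.2 - ee 2 1 p.1 * ee 3 2 p.2)} :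
        Set (Fin 2 × Fin 3 → ℂ))) :
    ∃ u w : Fin k → ℂ, ∀ a b ℓ, Ψ (a, b, ℓ) =
      ![![0, Real.sqrt 2 * w ℓ, u ℓ], ![-(Real.sqrt 2 * u ℓ), 0, -w ℓ]] a b := by
  choose c d hcd using fun ℓ => Submodule.mem_span_pair.mp (hΨ ℓ)
  refine ⟨fun ℓ => c ℓ / Real.sqrt 3, fun ℓ => d ℓ / Real.sqrt 3, fun a b ℓ => ?_⟩
  rw [← congrFun (hcd ℓ) (a, b)]
  fin_cases a <;> fin_cases b <;>
    simp only [ee, Pi.add_apply, Pi.smul_apply, smul_eq_mul, Fin.isValue, Fin.zero_eta, Fin.mk_one,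
      Fin.reduceFinMk, Fin.coe_ofNat_eq_mod, Nat.zero_mod, Nat.one_mod, Nat.mod_succ,
      OfNat.zero_ne_ofNat, OfNat.one_ne_ofNat, OfNat.ofNat_ne_one, OfNat.ofNat_ne_zero, zero_ne_one,
      one_ne_zero, ↓reduceIte, cons_val', cons_val_zero, cons_val_one, cons_val,
      cons_val_fin_one] <;>
    ring

theorem trB_eq_polarMatrix_add {k : ℕ} (u w : Fin k → ℂ) (Ψ : Fin 2 × Fin 3 × Fin k → ℂ)
    (hΨ : ∀ a b ℓ, Ψ (a, b, ℓ) =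
      ![![0, Real.sqrt 2 * w ℓ, u ℓ], ![-(Real.sqrt 2 * u ℓ), 0, -w ℓ]] a b) :
    TrB Ψ = polarMatrix u (-w) + vecMulVec (ee 2 0) (star (ee 2 0)) ⊗ₖ vecMulVec w (star w)
      + vecMulVec (ee 2 1) (star (ee 2 1)) ⊗ₖ vecMulVec u (star u) := by
  have h2 : (Real.sqrt 2 : ℂ) ^ 2 = 2 := by
    rw [← Complex.ofReal_pow, Real.sq_sqrt zero_le_two, Complex.ofReal_ofNat]
  ext ⟨a, ℓ⟩ ⟨a', ℓ'⟩
  fin_cases a <;> fin_cases a' <;>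
    simp only [TrB, polarMatrix, hΨ, ee, Fin.sum_univ_three, of_apply, Matrix.add_apply,
      kroneckerMap_apply, vecMulVec_apply, Pi.neg_apply, Pi.star_apply, Fin.isValue,
      Fin.zero_eta, Fin.mk_one, Fin.coe_ofNat_eq_mod, Nat.zero_mod, Nat.mod_succ, zero_ne_one,
      one_ne_zero, ↓reduceIte, cons_val', cons_val_zero, cons_val_one, cons_val, cons_val_fin_one,
      map_zero, map_neg, map_mul, Complex.conj_ofReal, star_zero, star_one, RCLike.star_def] <;>
    ring_nf <;> simp only [h2] <;> ring

/-- The 2-dimensional subspace of `ℂ² ⊗ ℂ³` spanned by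
`(1/√3)(e₀⊗e₂ − √2·e₁⊗e₀)` and `(1/√3)(√2·e₀⊗e₁ − e₁⊗e₂)` is an EB space. -/
theorem eb_prl_example :
    IsEBSpace (Submodule.span ℂ
      ({fun p : Fin 2 × Fin 3 =>
          (1 / (Real.sqrt 3 : ℂ)) *
            (ee 2 0 p.1 * ee 3 2 p.2 - (Real.sqrt 2 : ℂ) * ee 2 1 p.1 * ee 3 0 p.2),
        fun p : Fin 2 × Fin 3 =>
          (1 / (Real.sqrt 3 : ℂ)) *
            ((Real.sqrt 2 : ℂ) * ee 2 0 p.1 * ee 3 1 p.2 - ee 2 1 p.1 * ee 3 2 p.2)} :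
        Set (Fin 2 × Fin 3 → ℂ))) := by
  intro k _ Ψ hΨ
  obtain ⟨u, w, hΨ⟩ := exists_coeffs_of_slices_mem_span Ψ hΨ
  rw [trB_eq_polarMatrix_add u w Ψ hΨ]
  exact ((isSep_polarMatrix u (-w)).add (isSep_kronecker_vecMulVec _ _)).add
    (isSep_kronecker_vecMulVec _ _)
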